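/- arXiv:2211.14778 — 2 statements merged into one kernel-verified Lean document; each statement's English description precedes it below -/
import Mathlib

section
/- Let G be a finite group and C a closed twin class of the power graph P(G) that is different from the star class S and is of compound type (a union of at least two ⋄-classes). If y ∈ C is an element of maximum order in C, then o(y) = p^r for some prime p and integer r ≥ 2, and there exists s with 0 ≤ s ≤ r−2 such that C = { z ∈ ⟨y⟩ : p^{s+1} ≤ o(z) ≤ p^r }. -/
/-- Closed neighbourhood of a vertex. -/
def closedNbhd {V : Type*} (Γ : SimpleGraph V) (x : V) : Set V := {y | Γ.Adj x y} ∪ {x}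

/-- Closed neighbourhood of a set of vertices (intersection convention; N[∅] = univ). -/
def closedNbhdSet {V : Type*} (Γ : SimpleGraph V) (X : Set V) : Set V :=
  ⋂ x ∈ X, closedNbhd Γ x

/-- Neighbourhood closure X̂ = N[N[X]]. -/
def nbhdClosure {V : Type*} (Γ : SimpleGraph V) (X : Set V) : Set V :=
  closedNbhdSet Γ (closedNbhdSet Γ X)

/-- Closed twin class of a vertex. -/
def twinClass {V : Type*} (Γ : SimpleGraph V) (y : V) : Set V :=
  {x | closedNbhd Γ x = closedNbhd Γ y}

/-- The power graph of a group. -/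
def powerGraph (G : Type*) [Group G] : SimpleGraph G where
  Adj x y := x ≠ y ∧ ((∃ m : ℕ, 0 < m ∧ y = x ^ m) ∨ (∃ m : ℕ, 0 < m ∧ x = y ^ m))
  symm := ⟨by rintro x y ⟨h, h2⟩; exact ⟨h.symm, h2.symm⟩⟩
  loopless := ⟨by rintro x ⟨h, _⟩; exact h rfl⟩

/-- The ⋄-class of an element: elements generating the same cyclic subgroup. -/
def diamondClass {G : Type*} [Group G] (y : G) : Set G :=
  {x | Subgroup.zpowers x = Subgroup.zpowers y}

/-! In the power graph `N[x] = {w | w ∈ ⟨x⟩ ∨ x ∈ ⟨w⟩}`. Maximality of `o(y)` puts the whole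
class `C = [y]` inside `⟨y⟩`. For a member `x` with `⟨x⟩ ≠ ⟨y⟩`, the element of order `d` in `⟨y⟩`
lies in `N[y] = N[x]`, so every divisor `d` of `o(y)` is comparable with `o(x)` under divisibility;
this forces `o(y) = p ^ r` with `r ≥ 2`. Then the subgroups of `⟨y⟩` form a chain, and `C` is
upward closed in `⟨y⟩`: it is the set of elements of `⟨y⟩` of order at least the least order
`p ^ (s + 1)` occurring in `C`. -/

open Subgroup

theorem Nat.exists_prime_pow_of_forall_dvd_or_dvd {m n : ℕ} (hm : 1 < m) (hlt : m < n)
    (h : ∀ d, d ∣ n → d ∣ m ∨ m ∣ d) :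
    ∃ p r, p.Prime ∧ 2 ≤ r ∧ n = p ^ r := by
  have hprime_dvd : ∀ q, q.Prime → q ∣ n → q ∣ m := fun q hq hqn =>
    (h q hqn).elim id fun hmq => (hq.eq_one_or_self_of_dvd m hmq).resolve_left hm.ne' ▸ dvd_rfl
  -- `n ∤ m`, so some prime power `ℓ ^ k ∣ n` misses `m`; then `m ∣ ℓ ^ k` makes `m` a power of `ℓ`.
  obtain ⟨ℓ, k, hℓ, hℓn, hℓm⟩ : ∃ ℓ k, ℓ.Prime ∧ ℓ ^ k ∣ n ∧ ¬ ℓ ^ k ∣ m := by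
    by_contra! hall
    have := Nat.le_of_dvd (by omega) ((Nat.dvd_iff_prime_pow_dvd_dvd m n).2 hall)
    omega
  obtain ⟨t, -, rfl⟩ := (Nat.dvd_prime_pow hℓ).1 ((h _ hℓn).resolve_left hℓm)
  have hn : n = ℓ ^ n.primeFactorsList.length :=
    Nat.eq_prime_pow_of_unique_prime_dvd (by omega) fun hq hqn =>
      (Nat.prime_dvd_prime_iff_eq hq hℓ).1 (hq.dvd_of_dvd_pow (hprime_dvd _ hq hqn))
  refine ⟨ℓ, _, hℓ, ?_, hn⟩
  have ht : t ≠ 0 := by rintro rfl; simp at hm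
  rw [hn, Nat.pow_lt_pow_iff_right hℓ.one_lt] at hlt
  omega

section Group

variable {G : Type*} [Group G] [Finite G]

theorem mem_zpowers_iff_exists_pos_pow {x w : G} :
    w ∈ zpowers x ↔ ∃ m : ℕ, 0 < m ∧ w = x ^ m := by
  refine ⟨fun h => ?_, fun ⟨m, _, hm⟩ => hm ▸ npow_mem_zpowers x m⟩
  obtain ⟨n, rfl⟩ := mem_powers_iff_mem_zpowers.2 h
  exact ⟨n + orderOf x, by have := orderOf_pos x; omega,
    by rw [pow_add, pow_orderOf_eq_one, mul_one]⟩

theorem zpowers_eq_of_mem_of_orderOf_le {x y : G} (h : x ∈ zpowers y)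
    (hle : orderOf y ≤ orderOf x) : zpowers x = zpowers y :=
  eq_of_le_of_card_ge (zpowers_le.2 h) (by rwa [Nat.card_zpowers, Nat.card_zpowers])

theorem mem_zpowers_pow_orderOf_div {y u : G} {d : ℕ} (hu : u ∈ zpowers y)
    (hd : d ∣ orderOf y) (hud : u ^ d = 1) : u ∈ zpowers (y ^ (orderOf y / d)) := by
  obtain ⟨b, rfl⟩ := mem_powers_iff_mem_zpowers.2 hu
  rw [← pow_mul] at hud
  have hd0 : 0 < d := Nat.pos_of_dvd_of_pos hd (orderOf_pos y)
  obtain ⟨c, rfl⟩ : orderOf y / d ∣ b := by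
    rw [← Nat.mul_dvd_mul_iff_right hd0, Nat.div_mul_cancel hd]
    exact orderOf_dvd_of_pow_eq_one hud
  show y ^ (orderOf y / d * c) ∈ _
  rw [pow_mul]
  exact npow_mem_zpowers _ c

theorem zpowers_eq_zpowers_pow_orderOf_div {y z : G} (hz : z ∈ zpowers y) :
    zpowers z = zpowers (y ^ (orderOf y / orderOf z)) := by
  have hdvd := orderOf_dvd_of_mem_zpowers hz
  exact zpowers_eq_of_mem_of_orderOf_le (mem_zpowers_pow_orderOf_div hz hdvd
    (pow_orderOf_eq_one z)) (orderOf_pow_orderOf_div (orderOf_pos y).ne' hdvd).le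

/-- The cyclic group `⟨y⟩` has a unique subgroup of each order dividing `orderOf y`. -/
theorem mem_zpowers_of_orderOf_dvd {y z w : G} (hz : z ∈ zpowers y) (hw : w ∈ zpowers y)
    (hd : orderOf w ∣ orderOf z) : w ∈ zpowers z := by
  rw [zpowers_eq_zpowers_pow_orderOf_div hz]
  exact mem_zpowers_pow_orderOf_div hw (orderOf_dvd_of_mem_zpowers hz)
    (orderOf_dvd_iff_pow_eq_one.1 hd)

theorem mem_zpowers_or_mem_zpowers_of_orderOf_eq_prime_pow {y : G} {p r : ℕ} (hp : p.Prime)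
    (hy : orderOf y = p ^ r) {a b : G} (ha : a ∈ zpowers y) (hb : b ∈ zpowers y) :
    a ∈ zpowers b ∨ b ∈ zpowers a := by
  obtain ⟨i, -, hi⟩ := (Nat.dvd_prime_pow hp).1 (hy ▸ orderOf_dvd_of_mem_zpowers ha)
  obtain ⟨j, -, hj⟩ := (Nat.dvd_prime_pow hp).1 (hy ▸ orderOf_dvd_of_mem_zpowers hb)
  rcases le_total i j with hij | hij
  · exact .inl (mem_zpowers_of_orderOf_dvd hb ha (hi ▸ hj ▸ pow_dvd_pow p hij))
  · exact .inr (mem_zpowers_of_orderOf_dvd ha hb (hi ▸ hj ▸ pow_dvd_pow p hij))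

end Group

theorem twinClass_eq_of_mem {V : Type*} {Γ : SimpleGraph V} {x y : V}
    (h : y ∈ twinClass Γ x) : twinClass Γ x = twinClass Γ y := by
  ext z
  exact ⟨fun hz => hz.trans h.symm, fun hz => hz.trans h⟩

section PowerGraph

variable {G : Type*} [Group G] [Finite G]

theorem closedNbhd_powerGraph (x : G) :
    closedNbhd (powerGraph G) x = {w | w ∈ zpowers x ∨ x ∈ zpowers w} := by
  ext w
  by_cases hwx : w = x
  · subst hwx
    simp [closedNbhd, mem_zpowers]
  · simp [closedNbhd, powerGraph, hwx, Ne.symm hwx, mem_zpowers_iff_exists_pos_pow]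

theorem mem_twinClass_powerGraph {y z : G} :
    z ∈ twinClass (powerGraph G) y ↔
      ∀ w, (w ∈ zpowers z ∨ z ∈ zpowers w) ↔ (w ∈ zpowers y ∨ y ∈ zpowers w) := by
  simp only [twinClass, Set.mem_ofPred_eq, closedNbhd_powerGraph, Set.ext_iff]

theorem twinClass_powerGraph_subset_zpowers {y : G}
    (hmax : ∀ z ∈ twinClass (powerGraph G) y, orderOf z ≤ orderOf y) :
    twinClass (powerGraph G) y ⊆ zpowers y := by
  intro z hz
  rcases (mem_twinClass_powerGraph.1 hz z).1 (.inl (mem_zpowers z)) with hzy | hyz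
  · exact hzy
  · rw [zpowers_eq_of_mem_of_orderOf_le hyz (hmax z hz)]
    exact mem_zpowers z

theorem dvd_or_dvd_orderOf_of_mem_twinClass {x y : G} (hx : x ∈ twinClass (powerGraph G) y)
    {d : ℕ} (hd : d ∣ orderOf y) : d ∣ orderOf x ∨ orderOf x ∣ d := by
  have hord : orderOf (y ^ (orderOf y / d)) = d := orderOf_pow_orderOf_div (orderOf_pos y).ne' hd
  rw [← hord]
  exact ((mem_twinClass_powerGraph.1 hx _).2 (.inl (npow_mem_zpowers y _))).imp
    orderOf_dvd_of_mem_zpowers orderOf_dvd_of_mem_zpowers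

theorem mem_twinClass_of_mem_zpowers {x y z : G}
    (hchain : ∀ a ∈ zpowers y, ∀ b ∈ zpowers y, a ∈ zpowers b ∨ b ∈ zpowers a)
    (hx : x ∈ twinClass (powerGraph G) y) (hxz : x ∈ zpowers z) (hzy : z ∈ zpowers y) :
    z ∈ twinClass (powerGraph G) y := by
  refine mem_twinClass_powerGraph.2 fun w => ⟨?_, ?_⟩
  · rintro (hwz | hzw)
    · exact .inl (zpowers_le.2 hzy hwz)
    · exact (mem_twinClass_powerGraph.1 hx w).1 (.inr (zpowers_le.2 hzw hxz))
  · rintro (hwy | hyw)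
    · exact hchain w hwy z hzy
    · exact .inr (zpowers_le.2 hyw hzy)

theorem twinClass_powerGraph_eq_setOf_orderOf {x y : G}
    (hchain : ∀ a ∈ zpowers y, ∀ b ∈ zpowers y, a ∈ zpowers b ∨ b ∈ zpowers a)
    (hmax : ∀ z ∈ twinClass (powerGraph G) y, orderOf z ≤ orderOf y)
    (hx : x ∈ twinClass (powerGraph G) y)
    (hmin : ∀ z ∈ twinClass (powerGraph G) y, orderOf x ≤ orderOf z) :
    twinClass (powerGraph G) y =
      {z | z ∈ zpowers y ∧ orderOf x ≤ orderOf z ∧ orderOf z ≤ orderOf y} := by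
  have hsub := twinClass_powerGraph_subset_zpowers hmax
  ext z
  refine ⟨fun hz => ⟨hsub hz, hmin z hz, hmax z hz⟩, fun ⟨hzy, hxz, _⟩ => ?_⟩
  refine mem_twinClass_of_mem_zpowers hchain hx ?_ hzy
  rcases hchain x (hsub hx) z hzy with h | h
  · exact h
  · rw [zpowers_eq_of_mem_of_orderOf_le h hxz]
    exact mem_zpowers x

end PowerGraph

theorem stmt11 {G : Type*} [Group G] [Fintype G] (C : Set G)
    (hC : ∃ w, C = twinClass (powerGraph G) w)
    (hS : C ≠ twinClass (powerGraph G) 1)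
    (hcomp : ∃ a ∈ C, ∃ b ∈ C, Subgroup.zpowers a ≠ Subgroup.zpowers b)
    (y : G) (hy : y ∈ C) (hmax : ∀ z ∈ C, orderOf z ≤ orderOf y) :
    ∃ p r : ℕ, p.Prime ∧ 2 ≤ r ∧ orderOf y = p ^ r ∧
      ∃ s ≤ r - 2,
        C = {z | z ∈ Subgroup.zpowers y ∧ p ^ (s + 1) ≤ orderOf z ∧ orderOf z ≤ p ^ r} := by
  obtain rfl : C = twinClass (powerGraph G) y := by
    obtain ⟨w, rfl⟩ := hC
    exact twinClass_eq_of_mem hy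
  have hne_one : ∀ x ∈ twinClass (powerGraph G) y, orderOf x ≠ 1 := fun x hx h1 =>
    hS (twinClass_eq_of_mem (orderOf_eq_one_iff.1 h1 ▸ hx))
  have hsub := twinClass_powerGraph_subset_zpowers hmax
  obtain ⟨x, hxC, hxy⟩ : ∃ x ∈ twinClass (powerGraph G) y, zpowers x ≠ zpowers y := by
    obtain ⟨a, ha, b, hb, hab⟩ := hcomp
    by_cases h : zpowers a = zpowers y
    · exact ⟨b, hb, fun hb' => hab (h.trans hb'.symm)⟩
    · exact ⟨a, ha, h⟩
  have hxlt : orderOf x < orderOf y := (hmax x hxC).lt_of_ne fun h =>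
    hxy (zpowers_eq_of_mem_of_orderOf_le (hsub hxC) h.ge)
  obtain ⟨p, r, hp, hr, hyr⟩ := Nat.exists_prime_pow_of_forall_dvd_or_dvd
    (lt_of_le_of_ne (orderOf_pos x) (hne_one x hxC).symm) hxlt
    fun d hd => dvd_or_dvd_orderOf_of_mem_twinClass hxC hd
  obtain ⟨x₀, hx₀C, hmin⟩ := Set.exists_min_image _ orderOf (Set.toFinite _) ⟨y, hy⟩
  obtain ⟨k, -, hk⟩ := (Nat.dvd_prime_pow hp).1 (hyr ▸ orderOf_dvd_of_mem_zpowers (hsub hx₀C))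
  have hk0 : k ≠ 0 := by rintro rfl; exact hne_one x₀ hx₀C hk
  have hkr : k < r := (Nat.pow_lt_pow_iff_right hp.one_lt).1
    (hk ▸ hyr ▸ (hmin x hxC).trans_lt hxlt)
  refine ⟨p, r, hp, hr, hyr, k - 1, by omega, ?_⟩
  rw [Nat.sub_add_cancel (Nat.one_le_iff_ne_zero.2 hk0), ← hk, ← hyr]
  exact twinClass_powerGraph_eq_setOf_orderOf
    (fun a ha b hb => mem_zpowers_or_mem_zpowers_of_orderOf_eq_prime_pow hp hyr ha hb) hmax hx₀C hmin
end

section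
/- Let G be a finite group whose power graph has star set S = {1}, and let C = [y]_N be a critical class. Then C is of plain type if and only if there exists x ∈ G \ Ĉ such that |[x]_N| ≤ |C| and {x, y} is an edge of P(G). -/
/-- A critical class: Ĉ = C ∪̇ {1} and |Ĉ| = p^r for a prime p and r ≥ 2. -/
def IsCritical {G : Type*} [Group G] (P : SimpleGraph G) (C : Set G) : Prop :=
  nbhdClosure P C = C ∪ {1} ∧ (1 : G) ∉ C ∧
    ∃ p r : ℕ, p.Prime ∧ 2 ≤ r ∧ (nbhdClosure P C).ncard = p ^ r

/-!
In the power graph, `N[x]` is the set of elements `u` with `u ∈ ⟨x⟩` or `x ∈ ⟨u⟩`. The key fact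
is about closed twins `c ≠ 1` and `z` with `⟨c⟩ < ⟨z⟩`: every divisor of `|z|` is the order of an
element of `⟨z⟩ ⊆ N[c]`, which forces `|z|` to be a prime power `q ^ b`; and if `c ∈ ⟨g⟩`, an
element of `⟨g⟩` of order `|c| q'` lies in `N[c] = N[z]`, which forces `q' = q`, so `|g|` is a
power of `q` as well.

If `C` is the ⋄-class of `y`, then `|y|` is not a prime power, since otherwise `Ĉ = ⟨y⟩` and
`φ(|y|) = |C| = |Ĉ| - 1` would make `|Ĉ| = p ^ r` prime. By the key fact, and as `1` is the only
star vertex, the twin class of `x = y ^ (|y| / q)` for a prime `q ∣ |y|` lies in its ⋄-class,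
of size `φ(q) ≤ φ(|y|) = |C|`.
Conversely, if `C` is not a ⋄-class, pick `z ∈ C` of maximal order; then `C ⊆ ⟨z⟩` contains some
`c` with `⟨c⟩ < ⟨z⟩`, so `Ĉ = ⟨z⟩` is a cyclic `q`-group. A neighbour `x ∉ Ĉ` of `y` then satisfies
`⟨z⟩ < ⟨x⟩` with `|x|` a power of `q`, so its ⋄-class alone has `φ(|x|) ≥ |z| > |C|` elements.
-/

open Subgroup
open scoped Nat

section ClosedNeighbourhoods

variable {V : Type*} {Γ : SimpleGraph V}

lemma self_mem_closedNbhd (x : V) : x ∈ closedNbhd Γ x := Or.inr rfl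

lemma mem_closedNbhdSet_iff {X : Set V} {v : V} :
    v ∈ closedNbhdSet Γ X ↔ ∀ c ∈ X, v ∈ closedNbhd Γ c := by
  simp [closedNbhdSet]

end ClosedNeighbourhoods

lemma isPrimePow_of_forall_dvd_or_dvd {m n : ℕ} (hm : 1 < m) (hmn : m ∣ n) (hlt : m < n)
    (H : ∀ k, k ∣ n → m ∣ k ∨ k ∣ m) : IsPrimePow n := by
  obtain ⟨p, k, hp, hpk, hpm⟩ : ∃ p k : ℕ, p.Prime ∧ p ^ k ∣ n ∧ ¬ p ^ k ∣ m := by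
    by_contra! h
    have hnm : n ∣ m := (Nat.dvd_iff_prime_pow_dvd_dvd m n).2 h
    exact absurd (Nat.le_of_dvd (by omega) hnm) (by omega)
  obtain ⟨a, -, rfl⟩ := (Nat.dvd_prime_pow hp).1 ((H _ hpk).resolve_right hpm)
  have ha : a ≠ 0 := by rintro rfl; simp at hm
  refine isPrimePow_iff_unique_prime_dvd.2
    ⟨p, ⟨hp, (dvd_pow_self p ha).trans hmn⟩, fun d ⟨hd, hdn⟩ => ?_⟩
  rcases H d hdn with h | h
  · exact ((Nat.prime_dvd_prime_iff_eq hp hd).1 ((dvd_pow_self p ha).trans h)).symm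
  · exact (Nat.prime_dvd_prime_iff_eq hd hp).1 (hd.dvd_of_dvd_pow h)

lemma le_totient_of_dvd_of_lt {n d : ℕ} (hn : IsPrimePow n) (hd : d ∣ n) (hlt : d < n) :
    d ≤ φ n := by
  obtain ⟨q, s, hq, hs, rfl⟩ := hn
  rw [← Nat.prime_iff] at hq
  obtain ⟨i, -, rfl⟩ := (Nat.dvd_prime_pow hq).1 hd
  have his : i < s := (Nat.pow_lt_pow_iff_right hq.one_lt).1 hlt
  rw [Nat.totient_prime_pow hq hs]
  calc q ^ i ≤ q ^ (s - 1) := Nat.pow_le_pow_right hq.pos (by omega)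
    _ ≤ q ^ (s - 1) * (q - 1) := Nat.le_mul_of_pos_right _ (by have := hq.two_le; omega)

section Cyclic

variable {G : Type*} [Group G]

lemma ncard_coe_zpowers (x : G) : (zpowers x : Set G).ncard = orderOf x := by
  rw [← Nat.card_coe_set_eq, SetLike.coe_sort_coe, Nat.card_zpowers]

variable [Finite G]

lemma zpowers_eq_of_mem_of_orderOf_eq {a g : G} (ha : a ∈ zpowers g)
    (h : orderOf a = orderOf g) : zpowers a = zpowers g :=
  eq_of_le_of_card_ge (zpowers_le.2 ha) (by rw [Nat.card_zpowers, Nat.card_zpowers, h])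

lemma mem_zpowers_pow_div_of_pow_eq_one {g u : G} {d : ℕ} (hu : u ∈ zpowers g)
    (hd : d ∣ orderOf g) (hud : u ^ d = 1) : u ∈ zpowers (g ^ (orderOf g / d)) := by
  obtain ⟨i, rfl⟩ := (Submonoid.mem_powers_iff _ _).1 (mem_powers_iff_mem_zpowers.2 hu)
  have hd0 : 0 < d := Nat.pos_of_dvd_of_pos hd (orderOf_pos g)
  obtain ⟨k, rfl⟩ : orderOf g / d ∣ i := by
    rw [Nat.div_dvd_iff_dvd_mul hd hd0]
    exact orderOf_dvd_of_pow_eq_one (by rwa [← pow_mul, mul_comm] at hud)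
  rw [pow_mul]
  exact pow_mem (mem_zpowers _) k

/-- Both `a` and `w ^ (|w| / |a|)` generate the unique subgroup of `⟨g⟩` of order `|a|`. -/
lemma mem_zpowers_of_orderOf_dvd_s16 {g a w : G} (ha : a ∈ zpowers g) (hw : w ∈ zpowers g)
    (h : orderOf a ∣ orderOf w) : a ∈ zpowers w := by
  have hag : orderOf a ∣ orderOf g := orderOf_dvd_of_mem_zpowers ha
  have hw' : orderOf (w ^ (orderOf w / orderOf a)) = orderOf a :=
    orderOf_pow_orderOf_div (orderOf_pos w).ne' h
  have hw'1 := pow_orderOf_eq_one (w ^ (orderOf w / orderOf a))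
  rw [hw'] at hw'1
  have hsub : zpowers (w ^ (orderOf w / orderOf a)) = zpowers (g ^ (orderOf g / orderOf a)) := by
    refine eq_of_le_of_card_ge
      (zpowers_le.2 (mem_zpowers_pow_div_of_pow_eq_one (pow_mem hw _) hag hw'1)) ?_
    rw [Nat.card_zpowers, Nat.card_zpowers, hw', orderOf_pow_orderOf_div (orderOf_pos g).ne' hag]
  have hag' := mem_zpowers_pow_div_of_pow_eq_one ha hag (pow_orderOf_eq_one a)
  rw [← hsub] at hag'
  exact zpowers_le.2 (pow_mem (mem_zpowers w) _) hag'

lemma mem_zpowers_or_mem_zpowers_of_isPrimePow {g u v : G} (hg : IsPrimePow (orderOf g))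
    (hu : u ∈ zpowers g) (hv : v ∈ zpowers g) : u ∈ zpowers v ∨ v ∈ zpowers u := by
  obtain ⟨q, b, hq, -, hqb⟩ := hg
  rw [← Nat.prime_iff] at hq
  obtain ⟨i, -, hi⟩ := (Nat.dvd_prime_pow hq).1 (hqb ▸ orderOf_dvd_of_mem_zpowers hu)
  obtain ⟨j, -, hj⟩ := (Nat.dvd_prime_pow hq).1 (hqb ▸ orderOf_dvd_of_mem_zpowers hv)
  rcases le_total i j with h | h
  · exact Or.inl (mem_zpowers_of_orderOf_dvd_s16 hu hv (hi ▸ hj ▸ pow_dvd_pow q h))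
  · exact Or.inr (mem_zpowers_of_orderOf_dvd_s16 hv hu (hi ▸ hj ▸ pow_dvd_pow q h))

lemma ncard_diamondClass (x : G) : (diamondClass x).ncard = φ (orderOf x) := by
  classical
  have hx : diamondClass x =
      ((Finset.range (orderOf x)).filter (orderOf x).Coprime).image (x ^ ·) := by
    ext u
    simp only [Finset.coe_image, Finset.coe_filter, Finset.mem_range, Set.mem_image,
      Set.mem_ofPred_eq, diamondClass]
    constructor
    · intro hu
      obtain ⟨i, rfl⟩ :=
        (Submonoid.mem_powers_iff _ _).1 (mem_powers_iff_mem_zpowers.2 (hu ▸ mem_zpowers u))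
      refine ⟨i % orderOf x, ⟨Nat.mod_lt _ (orderOf_pos x), ?_⟩, pow_mod_orderOf x i⟩
      rw [← pow_mod_orderOf] at hu
      rw [Nat.coprime_comm, Nat.Coprime, ← mem_zpowers_pow_iff, hu]
      exact mem_zpowers x
    · rintro ⟨k, ⟨-, hk⟩, rfl⟩
      refine le_antisymm (zpowers_le.2 (pow_mem (mem_zpowers x) k)) (zpowers_le.2 ?_)
      exact mem_zpowers_pow_iff.2 (Nat.coprime_comm.1 hk)
  rw [hx, Set.ncard_coe_finset, Finset.card_image_of_injOn, Nat.totient]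
  exact pow_injOn_Iio_orderOf.mono fun k hk => (Finset.mem_filter.1 hk).1 |> Finset.mem_range.1

end Cyclic

section PowerGraph

variable {G : Type*} [Group G] [Finite G]

lemma exists_pos_pow_eq_iff_mem_zpowers {x z : G} :
    (∃ m : ℕ, 0 < m ∧ z = x ^ m) ↔ z ∈ zpowers x := by
  refine ⟨fun ⟨m, _, hm⟩ => hm ▸ pow_mem (mem_zpowers x) m, fun hz => ?_⟩
  obtain ⟨k, rfl⟩ := (Submonoid.mem_powers_iff _ _).1 (mem_powers_iff_mem_zpowers.2 hz)
  exact ⟨k + orderOf x, by have := orderOf_pos x; omega,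
    by rw [pow_add, pow_orderOf_eq_one, mul_one]⟩

lemma powerGraph_adj_iff {x z : G} :
    (powerGraph G).Adj x z ↔ x ≠ z ∧ (z ∈ zpowers x ∨ x ∈ zpowers z) := by
  simp only [powerGraph, exists_pos_pow_eq_iff_mem_zpowers]

lemma mem_closedNbhd_powerGraph_iff {x z : G} :
    z ∈ closedNbhd (powerGraph G) x ↔ z ∈ zpowers x ∨ x ∈ zpowers z := by
  rw [closedNbhd, Set.mem_union, Set.mem_ofPred_eq, powerGraph_adj_iff, Set.mem_singleton_iff]
  by_cases h : z = x
  · subst h; simp [mem_zpowers]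
  · simp [h, Ne.symm h]

lemma closedNbhd_powerGraph_one : closedNbhd (powerGraph G) 1 = Set.univ :=
  Set.eq_univ_of_forall fun _ => mem_closedNbhd_powerGraph_iff.2 (Or.inr (one_mem _))

lemma diamondClass_subset_twinClass (y : G) : diamondClass y ⊆ twinClass (powerGraph G) y := by
  intro u (hu : zpowers u = zpowers y)
  ext t
  simp only [mem_closedNbhd_powerGraph_iff, ← zpowers_le, hu]

lemma mem_zpowers_of_closedNbhd_eq_of_orderOf_le {u z : G}
    (hN : closedNbhd (powerGraph G) u = closedNbhd (powerGraph G) z)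
    (hle : orderOf u ≤ orderOf z) : u ∈ zpowers z := by
  rcases mem_closedNbhd_powerGraph_iff.1 (hN ▸ self_mem_closedNbhd u) with hu | hz
  · exact hu
  · have hzu := orderOf_dvd_of_mem_zpowers hz
    rw [zpowers_eq_of_mem_of_orderOf_eq hz (le_antisymm (Nat.le_of_dvd (orderOf_pos u) hzu) hle)]
    exact mem_zpowers u

/-- When `|z|` is a prime power, `⟨z⟩` is a chain under `u ∈ ⟨v⟩`, so each of its elements is
comparable with every neighbour of `z`. -/
lemma zpowers_subset_nbhdClosure {z : G} {X : Set G} (hz : z ∈ X)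
    (hpp : IsPrimePow (orderOf z)) : (zpowers z : Set G) ⊆ nbhdClosure (powerGraph G) X := by
  intro u hu
  refine mem_closedNbhdSet_iff.2 fun v hv => mem_closedNbhd_powerGraph_iff.2 ?_
  rcases mem_closedNbhd_powerGraph_iff.1 (mem_closedNbhdSet_iff.1 hv z hz) with h | h
  · exact mem_zpowers_or_mem_zpowers_of_isPrimePow hpp hu h
  · exact Or.inl (zpowers_le.2 h hu)

/-- Every divisor `k` of `|z|` is the order of some element of `⟨z⟩ ⊆ N[c]`, hence is
comparable with `|c|` under divisibility. -/
lemma isPrimePow_orderOf_of_closedNbhd_eq {c z : G}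
    (hN : closedNbhd (powerGraph G) c = closedNbhd (powerGraph G) z) (hlt : zpowers c < zpowers z)
    (hc : c ≠ 1) : IsPrimePow (orderOf z) := by
  have hcz : c ∈ zpowers z := zpowers_le.1 hlt.le
  have hcz' : orderOf c ∣ orderOf z := orderOf_dvd_of_mem_zpowers hcz
  refine isPrimePow_of_forall_dvd_or_dvd ?_ hcz' ?_ fun k hk => ?_
  · exact lt_of_le_of_ne (orderOf_pos c) (Ne.symm (mt orderOf_eq_one_iff.1 hc))
  · refine lt_of_le_of_ne (Nat.le_of_dvd (orderOf_pos z) hcz') fun h => hlt.ne ?_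
    exact zpowers_eq_of_mem_of_orderOf_eq hcz h
  · have hw : orderOf (z ^ (orderOf z / k)) = k := orderOf_pow_orderOf_div (orderOf_pos z).ne' hk
    have hwc : z ^ (orderOf z / k) ∈ closedNbhd (powerGraph G) c :=
      hN ▸ mem_closedNbhd_powerGraph_iff.2 (Or.inl (pow_mem (mem_zpowers z) _))
    rcases mem_closedNbhd_powerGraph_iff.1 hwc with h | h
    · exact Or.inr (hw ▸ orderOf_dvd_of_mem_zpowers h)
    · exact Or.inl (hw ▸ orderOf_dvd_of_mem_zpowers h)

/-- Test the element `w ∈ ⟨g⟩` of order `|c| q` against `N[c] = N[z]`. -/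
lemma dvd_orderOf_of_closedNbhd_eq {c z : G}
    (hN : closedNbhd (powerGraph G) c = closedNbhd (powerGraph G) z) (hlt : zpowers c < zpowers z)
    {g : G} {q : ℕ} (hcg : c ∈ zpowers g) (hq : q.Prime)
    (hqg : q ∣ orderOf g) : q ∣ orderOf z := by
  have hcz : c ∈ zpowers z := zpowers_le.1 hlt.le
  obtain ⟨t, ht⟩ : orderOf c ∣ orderOf z := orderOf_dvd_of_mem_zpowers hcz
  by_cases hqc : q ∣ orderOf c
  · exact hqc.trans ⟨t, ht⟩
  have hk : orderOf c * q ∣ orderOf g :=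
    (Nat.coprime_comm.1 ((hq.coprime_iff_not_dvd).2 hqc)).mul_dvd_of_dvd_of_dvd
      (orderOf_dvd_of_mem_zpowers hcg) hqg
  set w := g ^ (orderOf g / (orderOf c * q))
  have hw : orderOf w = orderOf c * q := orderOf_pow_orderOf_div (orderOf_pos g).ne' hk
  have hcw : c ∈ zpowers w :=
    mem_zpowers_of_orderOf_dvd_s16 hcg (pow_mem (mem_zpowers g) _) (hw ▸ dvd_mul_right _ _)
  have hwz : w ∈ closedNbhd (powerGraph G) z :=
    hN ▸ mem_closedNbhd_powerGraph_iff.2 (Or.inr hcw)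
  rcases mem_closedNbhd_powerGraph_iff.1 hwz with h | h
  · exact (dvd_mul_left q _).trans (hw ▸ orderOf_dvd_of_mem_zpowers h)
  · have htq : t ∣ q := Nat.dvd_of_mul_dvd_mul_left (orderOf_pos c)
      (ht ▸ hw ▸ orderOf_dvd_of_mem_zpowers h)
    rcases (Nat.dvd_prime hq).1 htq with rfl | rfl
    · exact absurd (zpowers_eq_of_mem_of_orderOf_eq hcz (by rw [ht, mul_one])) hlt.ne
    · exact ht ▸ dvd_mul_left _ _

lemma isPrimePow_orderOf_of_mem_zpowers {c z : G}
    (hN : closedNbhd (powerGraph G) c = closedNbhd (powerGraph G) z) (hlt : zpowers c < zpowers z)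
    (hc : c ≠ 1) {g : G} (hcg : c ∈ zpowers g) :
    IsPrimePow (orderOf g) := by
  obtain ⟨p, -, hp⟩ :=
    isPrimePow_iff_unique_prime_dvd.1 (isPrimePow_orderOf_of_closedNbhd_eq hN hlt hc)
  have hg : orderOf g ≠ 1 := fun h => hc (by
    rwa [orderOf_eq_one_iff.1 h, zpowers_one_eq_bot, mem_bot] at hcg)
  have hq := Nat.minFac_prime hg
  refine isPrimePow_iff_unique_prime_dvd.2 ⟨_, ⟨hq, Nat.minFac_dvd _⟩, fun d ⟨hd, hdg⟩ => ?_⟩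
  rw [hp d ⟨hd, dvd_orderOf_of_closedNbhd_eq hN hlt hcg hd hdg⟩,
    hp _ ⟨hq, dvd_orderOf_of_closedNbhd_eq hN hlt hcg hq (Nat.minFac_dvd _)⟩]

lemma twinClass_subset_diamondClass
    (hstar : {x : G | closedNbhd (powerGraph G) x = Set.univ} = {1})
    {x g : G} (hx : x ≠ 1) (hxg : x ∈ zpowers g) (hg : ¬ IsPrimePow (orderOf g)) :
    twinClass (powerGraph G) x ⊆ diamondClass x := by
  intro u (hu : closedNbhd _ u = closedNbhd _ x)
  by_contra hne
  rcases mem_closedNbhd_powerGraph_iff.1 (hu ▸ self_mem_closedNbhd x) with h | h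
  · exact hg (isPrimePow_orderOf_of_mem_zpowers hu.symm
      (lt_of_le_of_ne (zpowers_le.2 h) (Ne.symm hne)) hx hxg)
  · have hu1 : u ≠ 1 := by
      rintro rfl
      have hxs : x ∈ {x : G | closedNbhd (powerGraph G) x = Set.univ} :=
        hu.symm.trans closedNbhd_powerGraph_one
      rw [hstar] at hxs
      exact hx hxs
    exact hg (isPrimePow_orderOf_of_mem_zpowers hu (lt_of_le_of_ne (zpowers_le.2 h) hne) hu1
      (zpowers_le.2 hxg h))

end PowerGraph

section CriticalClass

variable {G : Type*} [Group G] [Finite G]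

lemma not_isPrimePow_orderOf_of_diamondClass {y : G} {p r : ℕ} (hr : 2 ≤ r)
    (hhat : nbhdClosure (powerGraph G) (diamondClass y) = diamondClass y ∪ {1})
    (h1 : (1 : G) ∉ diamondClass y)
    (hcard : (nbhdClosure (powerGraph G) (diamondClass y)).ncard = p ^ r) :
    ¬ IsPrimePow (orderOf y) := by
  intro hpp
  have hzp : (zpowers y : Set G) = nbhdClosure (powerGraph G) (diamondClass y) := by
    refine subset_antisymm (zpowers_subset_nbhdClosure rfl hpp) ?_
    rw [hhat]
    rintro u (hu | rfl)
    · exact (hu : zpowers u = zpowers y) ▸ mem_zpowers u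
    · exact one_mem _
  have hord : orderOf y = (diamondClass y).ncard + 1 := by
    rw [← ncard_coe_zpowers, hzp, hhat, Set.union_singleton,
      Set.ncard_insert_of_notMem h1 (Set.toFinite _)]
  have hprime : (orderOf y).Prime := by
    rw [← Nat.totient_eq_iff_prime (orderOf_pos y), ← ncard_diamondClass]
    omega
  rw [← ncard_coe_zpowers, hzp, hcard] at hprime
  exact Nat.Prime.not_prime_pow hr hprime

lemma exists_adj_ncard_twinClass_le_of_diamondClass
    (hstar : {x : G | closedNbhd (powerGraph G) x = Set.univ} = {1}) {y : G}
    (hhat : nbhdClosure (powerGraph G) (diamondClass y) = diamondClass y ∪ {1})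
    (h1 : (1 : G) ∉ diamondClass y) (hy : ¬ IsPrimePow (orderOf y)) :
    ∃ x : G, x ∉ nbhdClosure (powerGraph G) (diamondClass y) ∧
      (twinClass (powerGraph G) x).ncard ≤ (diamondClass y).ncard ∧ (powerGraph G).Adj x y := by
  have hy1 : orderOf y ≠ 1 := fun h => h1 (orderOf_eq_one_iff.1 h ▸ rfl)
  obtain ⟨q, hq, hqy⟩ := Nat.exists_prime_and_dvd hy1
  set x := y ^ (orderOf y / q)
  have hx : orderOf x = q := orderOf_pow_orderOf_div (orderOf_pos y).ne' hqy
  have hxy : x ∈ zpowers y := pow_mem (mem_zpowers y) _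
  have hxy' : orderOf x ≠ orderOf y := fun h => hy (by rw [← h, hx]; exact hq.isPrimePow)
  have hx1 : x ≠ 1 := fun h => hq.one_lt.ne' (by rw [← hx, h, orderOf_one])
  refine ⟨x, ?_, ?_, powerGraph_adj_iff.2 ⟨fun h => hxy' (h ▸ rfl), Or.inr hxy⟩⟩
  · rw [hhat]
    rintro (h | h)
    · exact hxy' (by rw [← Nat.card_zpowers, h, Nat.card_zpowers])
    · exact hx1 h
  · calc (twinClass (powerGraph G) x).ncard ≤ (diamondClass x).ncard :=
          Set.ncard_le_ncard (twinClass_subset_diamondClass hstar hx1 hxy hy)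
      _ = φ (orderOf x) := ncard_diamondClass x
      _ ≤ φ (orderOf y) := Nat.le_of_dvd (Nat.totient_pos.2 (orderOf_pos y))
          (Nat.totient_dvd_of_dvd (orderOf_dvd_of_mem_zpowers hxy))
      _ = (diamondClass y).ncard := (ncard_diamondClass y).symm

lemma exists_zpowers_lt_of_ne_diamondClass {y : G}
    (hne : twinClass (powerGraph G) y ≠ diamondClass y) :
    ∃ z ∈ twinClass (powerGraph G) y, twinClass (powerGraph G) y ⊆ zpowers z ∧
      ∃ c ∈ twinClass (powerGraph G) y, zpowers c < zpowers z := by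
  obtain ⟨z, hz, hzmax⟩ :=
    Set.exists_max_image _ orderOf (Set.toFinite (twinClass (powerGraph G) y)) ⟨y, rfl⟩
  have hsub : twinClass (powerGraph G) y ⊆ zpowers z := fun u hu =>
    mem_zpowers_of_closedNbhd_eq_of_orderOf_le (hu.trans hz.symm) (hzmax u hu)
  refine ⟨z, hz, hsub, ?_⟩
  obtain ⟨c, hc, hcy⟩ : ∃ c ∈ twinClass (powerGraph G) y, zpowers c ≠ zpowers y := by
    by_contra! h
    exact hne (subset_antisymm h (diamondClass_subset_twinClass y))
  by_cases hcz : zpowers c = zpowers z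
  · exact ⟨y, rfl, lt_of_le_of_ne (zpowers_le.2 (hsub rfl)) fun h => hcy (hcz.trans h.symm)⟩
  · exact ⟨c, hc, lt_of_le_of_ne (zpowers_le.2 (hsub hc)) hcz⟩

lemma twinClass_eq_diamondClass_of_adj {y x : G}
    (hhat : nbhdClosure (powerGraph G) (twinClass (powerGraph G) y) =
      twinClass (powerGraph G) y ∪ {1})
    (h1 : (1 : G) ∉ twinClass (powerGraph G) y)
    (hx : x ∉ nbhdClosure (powerGraph G) (twinClass (powerGraph G) y))
    (hxcard : (twinClass (powerGraph G) x).ncard ≤ (twinClass (powerGraph G) y).ncard)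
    (hxy : (powerGraph G).Adj x y) :
    twinClass (powerGraph G) y = diamondClass y := by
  by_contra hne
  obtain ⟨z, hz, hsub, c, hc, hlt⟩ := exists_zpowers_lt_of_ne_diamondClass hne
  have hN : closedNbhd (powerGraph G) c = closedNbhd (powerGraph G) z := hc.trans hz.symm
  have hc1 : c ≠ 1 := fun h => h1 (h ▸ hc)
  have hzp : nbhdClosure (powerGraph G) (twinClass (powerGraph G) y) = zpowers z := by
    refine subset_antisymm ?_
      (zpowers_subset_nbhdClosure hz (isPrimePow_orderOf_of_closedNbhd_eq hN hlt hc1))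
    rw [hhat]
    rintro u (hu | rfl)
    exacts [hsub hu, one_mem _]
  have hord : orderOf z = (twinClass (powerGraph G) y).ncard + 1 := by
    rw [← ncard_coe_zpowers, ← hzp, hhat, Set.union_singleton,
      Set.ncard_insert_of_notMem h1 (Set.toFinite _)]
  have hxz : x ∉ zpowers z := by rwa [hzp] at hx
  have hxNz : x ∈ closedNbhd (powerGraph G) z := hz ▸ Or.inl hxy.symm
  have hzx : z ∈ zpowers x := (mem_closedNbhd_powerGraph_iff.1 hxNz).resolve_left hxz
  have hzx_dvd : orderOf z ∣ orderOf x := orderOf_dvd_of_mem_zpowers hzx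
  have hzx_lt : orderOf z < orderOf x := lt_of_le_of_ne (Nat.le_of_dvd (orderOf_pos x) hzx_dvd)
    fun h => hxz (zpowers_eq_of_mem_of_orderOf_eq hzx h ▸ mem_zpowers x)
  have hxpp : IsPrimePow (orderOf x) :=
    isPrimePow_orderOf_of_mem_zpowers hN hlt hc1 (zpowers_le.2 hzx (zpowers_le.1 hlt.le))
  have hz_le := le_totient_of_dvd_of_lt hxpp hzx_dvd hzx_lt
  have hx_le := ncard_diamondClass x ▸ Set.ncard_le_ncard (diamondClass_subset_twinClass x)
  omega

end CriticalClass

theorem stmt16 {G : Type*} [Group G] [Fintype G]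
    (hstar : {x : G | closedNbhd (powerGraph G) x = Set.univ} = {1})
    (y : G) (C : Set G) (hC : C = twinClass (powerGraph G) y)
    (hcrit : IsCritical (powerGraph G) C) :
    C = diamondClass y ↔
      ∃ x : G, x ∉ nbhdClosure (powerGraph G) C ∧
        (twinClass (powerGraph G) x).ncard ≤ C.ncard ∧ (powerGraph G).Adj x y := by
  obtain ⟨hhat, h1, p, r, -, hr, hcard⟩ := hcrit
  constructor
  · rintro rfl
    exact exists_adj_ncard_twinClass_le_of_diamondClass hstar hhat h1
      (not_isPrimePow_orderOf_of_diamondClass hr hhat h1 hcard)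
  · rintro ⟨x, hx, hxcard, hxy⟩
    subst hC
    exact twinClass_eq_diamondClass_of_adj hhat h1 hx hxcard hxy
end
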